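/- arXiv:math/0412093 — 4 statements merged into one kernel-verified Lean document; each statement's English description precedes it below -/
import Mathlib

section
/- Let 0 < ε < 1/2, let m ≥ 1 be a natural number, and set b_k = (6/ε)^(k−1) for k ≥ 1. Let x : ℤ → ℝ satisfy x_j = 0 for all j ≤ 0 and, for every k with 1 ≤ k ≤ m, the inequality ε·|x_k| ≤ b_k − 2·x_{k−1} + 7·x_{k−2} − 7·x_{k−3} + 2·x_{k−4}. Then |x_k| ≤ (1/3)·(6/ε)^k for every k with 1 ≤ k ≤ m. -/
/-!
Write `r = 6/ε`, so `ε·r = 6` and `r > 12`. By induction on `k`, assume `|x_{k-i}| ≤ r^{k-i}/3`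
for `i = 1, …, 4` (trivially true at non-positive indices). The defining inequality then gives
`ε·|x_k| ≤ r^{k-4}·(5r³ + 7r² + 7r + 2)/3`, and `7r² + 7r + 2 ≤ r³` as soon as `r ≥ 8`, so
`ε·|x_k| ≤ 2r^{k-1} = ε·r^k/3`.
-/

namespace DeformedCube

variable {ε r : ℝ}

theorem abs_coord_le_step (hεr : ε * r = 6) (hr : 8 ≤ r) {t y y₁ y₂ y₃ y₄ : ℝ}
    (ht : 0 ≤ t) (h₁ : |y₁| ≤ t * r ^ 3 / 3) (h₂ : |y₂| ≤ t * r ^ 2 / 3) (h₃ : |y₃| ≤ t * r / 3)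
    (h₄ : |y₄| ≤ t / 3) (h : ε * |y| ≤ t * r ^ 3 - 2 * y₁ + 7 * y₂ - 7 * y₃ + 2 * y₄) :
    |y| ≤ t * r ^ 4 / 3 := by
  have hε : 0 < ε := by nlinarith
  have hcubic : 7 * r ^ 2 + 7 * r + 2 ≤ r ^ 3 := by nlinarith
  refine le_of_mul_le_mul_left ?_ hε
  calc ε * |y| ≤ t * r ^ 3 + 2 * |y₁| + 7 * |y₂| + 7 * |y₃| + 2 * |y₄| := by
        linarith [neg_abs_le y₁, le_abs_self y₂, neg_abs_le y₃, le_abs_self y₄]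
    _ ≤ t * (5 * r ^ 3 + 7 * r ^ 2 + 7 * r + 2) / 3 := by linarith
    _ ≤ 2 * t * r ^ 3 := by nlinarith
    _ = ε * (t * r ^ 4 / 3) := by linear_combination (-(t * r ^ 3) / 3) * hεr

theorem abs_coord_le (hεr : ε * r = 6) (hr : 8 ≤ r) {m : ℤ} {x : ℤ → ℝ}
    (hx0 : ∀ j : ℤ, j ≤ 0 → x j = 0)
    (hineq : ∀ k : ℤ, 1 ≤ k → k ≤ m →
      ε * |x k| ≤ r ^ (k - 1) - 2 * x (k - 1) + 7 * x (k - 2) - 7 * x (k - 3) + 2 * x (k - 4)) :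
    ∀ k : ℤ, k ≤ m → |x k| ≤ (1 / 3) * r ^ k := by
  suffices ∀ n : ℕ, ∀ k : ℤ, k ≤ n → k ≤ m → |x k| ≤ (1 / 3) * r ^ k from
    fun k hkm => this k.toNat k (Int.self_le_toNat k) hkm
  have hr0 : 0 < r := by linarith
  intro n
  induction n with
  | zero =>
    intro k hk _
    rw [hx0 k hk, abs_zero]
    positivity
  | succ n ih =>
    intro k hk hkm
    rcases le_or_gt k n with hkn | hkn
    · exact ih k hkn hkm
    obtain ⟨j, rfl⟩ : ∃ j : ℤ, k = j + 4 := ⟨k - 4, by ring⟩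
    have hpow : ∀ i : ℕ, r ^ (j + i) = r ^ j * r ^ i := fun i => by
      rw [zpow_add₀ hr0.ne', zpow_natCast]
    have hprev : ∀ i : ℕ, i < 4 → |x (j + i)| ≤ r ^ j * r ^ i / 3 := fun i hi => by
      linarith [hpow i, ih (j + i) (by omega) (by omega)]
    have hstep := hineq (j + 4) (by omega) hkm
    norm_num [add_sub_assoc] at hstep
    have hpow₃ := hpow 3
    have hpow₄ := hpow 4
    push_cast at hpow₃ hpow₄
    rw [hpow₃] at hstep
    rw [hpow₄, one_div_mul_eq_div]
    exact abs_coord_le_step hεr hr (zpow_nonneg hr0.le j)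
      (by simpa using hprev 3 (by norm_num)) (by simpa using hprev 2 (by norm_num))
      (by simpa using hprev 1 (by norm_num)) (by simpa using hprev 0 (by norm_num)) (by linarith)

end DeformedCube

theorem stmt_11_general (ε : ℝ) (hε0 : 0 < ε) (hε : ε < 1 / 2) (m : ℕ)
    (x : ℤ → ℝ) (hx0 : ∀ j : ℤ, j ≤ 0 → x j = 0)
    (hineq : ∀ k : ℤ, 1 ≤ k → k ≤ (m : ℤ) →
      ε * |x k| ≤ (6 / ε) ^ (k - 1) - 2 * x (k - 1) + 7 * x (k - 2)
        - 7 * x (k - 3) + 2 * x (k - 4)) :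
    ∀ k : ℤ, 1 ≤ k → k ≤ (m : ℤ) → |x k| ≤ (1 / 3) * (6 / ε) ^ k := by
  have hεr : ε * (6 / ε) = 6 := by field_simp
  have hr : 8 ≤ 6 / ε := by rw [le_div_iff₀ hε0]; linarith
  exact fun k _ hkm => DeformedCube.abs_coord_le hεr hr hx0 hineq k hkm

/-- The inductive coordinate bound for the deformed cube `D_m^ε`: if
`0 < ε < 1/2`, `b_k = (6/ε)^(k-1)`, `x_j = 0` for `j ≤ 0`, and
`ε·|x_k| ≤ b_k - 2x_{k-1} + 7x_{k-2} - 7x_{k-3} + 2x_{k-4}` for `1 ≤ k ≤ m`,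
then `|x_k| ≤ (1/3)·(6/ε)^k` for all `1 ≤ k ≤ m`. -/
theorem stmt_11 (ε : ℝ) (hε0 : 0 < ε) (hε : ε < 1 / 2) (m : ℕ) (hm : 1 ≤ m)
    (x : ℤ → ℝ) (hx0 : ∀ j : ℤ, j ≤ 0 → x j = 0)
    (hineq : ∀ k : ℤ, 1 ≤ k → k ≤ (m : ℤ) →
      ε * |x k| ≤ (6 / ε) ^ (k - 1) - 2 * x (k - 1) + 7 * x (k - 2)
        - 7 * x (k - 3) + 2 * x (k - 4)) :
    ∀ k : ℤ, 1 ≤ k → k ≤ (m : ℤ) → |x k| ≤ (1 / 3) * (6 / ε) ^ k :=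
  stmt_11_general ε hε0 hε m x hx0 hineq
end

section
/- Let 0 < ε < 1/2, let m ≥ 1 be a natural number, and set b_k = (6/ε)^(k−1) for k ≥ 1. Let x : ℤ → ℝ satisfy x_j = 0 for all j ≤ 0 and, for every k with 1 ≤ k ≤ m, the inequality ε·|x_k| ≤ b_k − 2·x_{k−1} + 7·x_{k−2} − 7·x_{k−3} + 2·x_{k−4}. Then for every k with 1 ≤ k ≤ m one has 2·|x_{k−1}| + 7·|x_{k−2}| + 7·|x_{k−3}| + 2·|x_{k−4}| < b_k; in particular the right-hand side b_k − 2·x_{k−1} + 7·x_{k−2} − 7·x_{k−3} + 2·x_{k−4} is strictly positive. -/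
/-! With `q = 6 / ε ≥ 8`, induction on `k` gives `|x_k| ≤ q^k / 3`. Indeed, if this holds below `k`,
the weighted sum `2|x_{k-1}| + 7|x_{k-2}| + 7|x_{k-3}| + 2|x_{k-4}|` is at most
`(2q³ + 7q² + 7q + 2) q^(k-4) / 3 < q^(k-1)`, so the `k`-th inequality gives
`ε |x_k| < 2 q^(k-1)`, i.e. `|x_k| < q^k / 3`. -/

lemma abs_alternating_sum_le (a b c d : ℝ) :
    |-2 * a + 7 * b - 7 * c + 2 * d| ≤ 2 * |a| + 7 * |b| + 7 * |c| + 2 * |d| := by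
  rw [abs_le]
  constructor <;>
    linarith [le_abs_self a, neg_abs_le a, le_abs_self b, neg_abs_le b,
      le_abs_self c, neg_abs_le c, le_abs_self d, neg_abs_le d]

lemma weighted_abs_sum_lt_zpow {q : ℝ} (hq : 8 ≤ q) {y : ℤ → ℝ} {k : ℤ}
    (hy : ∀ j : ℤ, 1 ≤ j → j ≤ 4 → |y (k - j)| ≤ q ^ (k - j) / 3) :
    2 * |y (k - 1)| + 7 * |y (k - 2)| + 7 * |y (k - 3)| + 2 * |y (k - 4)| < q ^ (k - 1) := by
  have hq0 : q ≠ 0 := by positivity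
  have h3 : q ^ (k - 3) = q ^ (k - 4) * q := by rw [← zpow_add_one₀ hq0]; ring_nf
  have h2 : q ^ (k - 2) = q ^ (k - 3) * q := by rw [← zpow_add_one₀ hq0]; ring_nf
  have h1 : q ^ (k - 1) = q ^ (k - 2) * q := by rw [← zpow_add_one₀ hq0]; ring_nf
  have hb1 := hy 1 le_rfl (by norm_num)
  have hb2 := hy 2 (by norm_num) (by norm_num)
  have hb3 := hy 3 (by norm_num) (by norm_num)
  have hb4 := hy 4 (by norm_num) le_rfl
  rw [h1, h2, h3] at hb1 ⊢
  rw [h2, h3] at hb2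
  rw [h3] at hb3
  have ht : 0 < q ^ (k - 4) := by positivity
  -- `2q³ + 7q² + 7q + 2 = (q + 1)(q + 2)(2q + 1) < 3q³` once `q ≥ 8`
  have hcubic : 2 * q ^ 3 + 7 * q ^ 2 + 7 * q + 2 < 3 * q ^ 3 := by nlinarith
  nlinarith

theorem abs_le_zpow_of_deformed_cube {q : ℝ} (hq : 8 ≤ q) {m : ℤ} {x : ℤ → ℝ}
    (hx0 : ∀ j : ℤ, j ≤ 0 → x j = 0)
    (hineq : ∀ k : ℤ, 1 ≤ k → k ≤ m →
      6 / q * |x k| ≤ q ^ (k - 1) - 2 * x (k - 1) + 7 * x (k - 2) - 7 * x (k - 3) + 2 * x (k - 4)) :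
    ∀ k : ℤ, k ≤ m → |x k| ≤ q ^ k / 3 := by
  have hq0 : 0 < q := by linarith
  intro k
  induction k using Int.strongRec (m := 1) with
  | lt k hk =>
    intro _
    rw [hx0 k (by omega), abs_zero]
    positivity
  | ge k hk ih =>
    intro hkm
    have hsum := weighted_abs_sum_lt_zpow hq (y := x) (k := k)
      fun j hj _ => ih (k - j) (by omega) (by omega)
    have hstep : 6 / q * |x k| < 2 * q ^ (k - 1) := by
      linarith [hineq k hk hkm,
        le_of_abs_le (abs_alternating_sum_le (x (k - 1)) (x (k - 2)) (x (k - 3)) (x (k - 4)))]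
    have hk_pow : q ^ k = q ^ (k - 1) * q := by rw [← zpow_add_one₀ hq0.ne']; ring_nf
    rw [hk_pow]
    rw [div_mul_eq_mul_div, div_lt_iff₀ hq0] at hstep
    linarith

theorem stmt_12_general (ε : ℝ) (hε0 : 0 < ε) (hε : ε < 1 / 2) (m : ℕ)
    (x : ℤ → ℝ) (hx0 : ∀ j : ℤ, j ≤ 0 → x j = 0)
    (hineq : ∀ k : ℤ, 1 ≤ k → k ≤ (m : ℤ) →
      ε * |x k| ≤ (6 / ε) ^ (k - 1) - 2 * x (k - 1) + 7 * x (k - 2)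
        - 7 * x (k - 3) + 2 * x (k - 4)) :
    ∀ k : ℤ, 1 ≤ k → k ≤ (m : ℤ) →
      2 * |x (k - 1)| + 7 * |x (k - 2)| + 7 * |x (k - 3)| + 2 * |x (k - 4)|
          < (6 / ε) ^ (k - 1) ∧
        0 < (6 / ε) ^ (k - 1) - 2 * x (k - 1) + 7 * x (k - 2)
          - 7 * x (k - 3) + 2 * x (k - 4) := by
  set q := 6 / ε with hq_def
  have hq : 8 ≤ q := by rw [hq_def, le_div_iff₀ hε0]; linarith
  have hε_eq : ε = 6 / q := by rw [hq_def, div_div_cancel₀ (by norm_num : (6 : ℝ) ≠ 0)]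
  rw [hε_eq] at hineq
  have hbound := abs_le_zpow_of_deformed_cube hq hx0 hineq
  intro k _ hkm
  have hsum := weighted_abs_sum_lt_zpow hq fun j hj _ => hbound (k - j) (by omega)
  exact ⟨hsum, by
    linarith [neg_le_of_abs_le
      (abs_alternating_sum_le (x (k - 1)) (x (k - 2)) (x (k - 3)) (x (k - 4)))]⟩

/-- For the deformed cube `D_m^ε` with `0 < ε < 1/2` and `b_k = (6/ε)^(k-1)`:
under the defining inequalities, for every `1 ≤ k ≤ m` one has
`2|x_{k-1}| + 7|x_{k-2}| + 7|x_{k-3}| + 2|x_{k-4}| < b_k`; in particular the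
right-hand side `b_k - 2x_{k-1} + 7x_{k-2} - 7x_{k-3} + 2x_{k-4}` is strictly
positive. -/
theorem stmt_12 (ε : ℝ) (hε0 : 0 < ε) (hε : ε < 1 / 2) (m : ℕ) (hm : 1 ≤ m)
    (x : ℤ → ℝ) (hx0 : ∀ j : ℤ, j ≤ 0 → x j = 0)
    (hineq : ∀ k : ℤ, 1 ≤ k → k ≤ (m : ℤ) →
      ε * |x k| ≤ (6 / ε) ^ (k - 1) - 2 * x (k - 1) + 7 * x (k - 2)
        - 7 * x (k - 3) + 2 * x (k - 4)) :
    ∀ k : ℤ, 1 ≤ k → k ≤ (m : ℤ) →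
      2 * |x (k - 1)| + 7 * |x (k - 2)| + 7 * |x (k - 3)| + 2 * |x (k - 4)|
          < (6 / ε) ^ (k - 1) ∧
        0 < (6 / ε) ^ (k - 1) - 2 * x (k - 1) + 7 * x (k - 2)
          - 7 * x (k - 3) + 2 * x (k - 4) :=
  stmt_12_general ε hε0 hε m x hx0 hineq
end

section
/- For m ≥ 5, let A'_m be the m × (m−4) real matrix (rows indexed 1,…,m, columns indexed 1,…,m−4) whose column j has entries 2, −7, 7, −2 in rows j+1, j+2, j+3, j+4 respectively, and 0 elsewhere. Then for every integer t, the vector λ ∈ ℝ^m with λ_i = (2^(i−t) − 1)·(1 − 2^(t+1−i)) (integer powers of 2 in ℝ) satisfies λᵀ · A'_m = 0; i.e., λ describes a linear dependence among the rows of A'_m. -/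
/-! The left kernel of `A'_m` consists of the solutions of the linear recurrence
`2 x₁ - 7 x₂ + 7 x₃ - 2 x₄ = 0`, whose characteristic polynomial
`-(x - 1)(x - 2)(2x - 1)` has roots `1, 2, 1/2`. The vector `λ` equals
`2^(1-t) 2^k + 2^t 2^(-k) - 3` (0-based `k`), a combination of the three
geometric solutions. -/

/-- The `m × (m-4)` matrix `A'_m` (here with 0-based indices: 1-based row `i`
and column `j` correspond to `i - 1 : Fin m` and `j - 1 : Fin (m-4)`), whose
1-based column `j` has entries `2, -7, 7, -2` in rows `j+1, j+2, j+3, j+4` and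
`0` elsewhere. -/
def matrixA (m : ℕ) : Matrix (Fin m) (Fin (m - 4)) ℝ := fun i j =>
  if (i : ℕ) = (j : ℕ) + 1 then 2
  else if (i : ℕ) = (j : ℕ) + 2 then -7
  else if (i : ℕ) = (j : ℕ) + 3 then 7
  else if (i : ℕ) = (j : ℕ) + 4 then -2
  else 0

open Matrix

theorem Fin.sum_univ_ite_val_eq {M : Type*} [AddCommMonoid M] {m n : ℕ} (hn : n < m) (c : M) :
    ∑ i : Fin m, (if (i : ℕ) = n then c else 0) = c := by
  rw [Fin.sum_univ_eq_sum_range (fun i => if i = n then c else 0)]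
  simp [hn]

theorem vecMul_matrixA_apply (f : ℕ → ℝ) {m : ℕ} (j : Fin (m - 4)) :
    vecMul (fun i : Fin m => f i) (matrixA m) j =
      2 * f (j + 1) - 7 * f (j + 2) + 7 * f (j + 3) - 2 * f (j + 4) := by
  have hj := j.isLt
  have hterm : ∀ i : ℕ,
      f i * (if i = (j : ℕ) + 1 then 2 else if i = (j : ℕ) + 2 then -7
        else if i = (j : ℕ) + 3 then 7 else if i = (j : ℕ) + 4 then -2 else 0) =
      (if i = (j : ℕ) + 1 then 2 * f (j + 1) else 0) +
      (if i = (j : ℕ) + 2 then -7 * f (j + 2) else 0) +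
      (if i = (j : ℕ) + 3 then 7 * f (j + 3) else 0) +
      (if i = (j : ℕ) + 4 then -2 * f (j + 4) else 0) := by
    intro i
    split_ifs <;> subst_vars <;> first | omega | ring
  simp only [vecMul, dotProduct, matrixA, hterm, Finset.sum_add_distrib]
  rw [Fin.sum_univ_ite_val_eq (by omega), Fin.sum_univ_ite_val_eq (by omega),
    Fin.sum_univ_ite_val_eq (by omega), Fin.sum_univ_ite_val_eq (by omega)]
  ring

theorem vecMul_matrixA_eq_zero {m : ℕ} (f : ℕ → ℝ)
    (hf : ∀ k, 2 * f (k + 1) - 7 * f (k + 2) + 7 * f (k + 3) - 2 * f (k + 4) = 0) :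
    vecMul (fun i : Fin m => f i) (matrixA m) = 0 :=
  funext fun j => (vecMul_matrixA_apply f j).trans (hf j)

theorem geometric_recurrence {r : ℝ} (hr : (r - 1) * (r - 2) * (2 * r - 1) = 0) (k : ℕ) :
    2 * r ^ (k + 1) - 7 * r ^ (k + 2) + 7 * r ^ (k + 3) - 2 * r ^ (k + 4) = 0 := by
  linear_combination (-r ^ (k + 1)) * hr

theorem two_zpow_sub_one_mul_one_sub_two_zpow (t : ℤ) (k : ℕ) :
    ((2 : ℝ) ^ ((k : ℤ) + 1 - t) - 1) * (1 - 2 ^ (t + 1 - ((k : ℤ) + 1))) =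
      2 ^ (1 - t) * 2 ^ k + 2 ^ t * (2⁻¹) ^ k - 3 := by
  have h2 : (2 : ℝ) ≠ 0 := two_ne_zero
  have hprod : (2 : ℝ) ^ (1 - t) * 2 ^ t = 2 := by
    rw [← zpow_add₀ h2, sub_add_cancel, zpow_one]
  have hx : (2 : ℝ) ^ k * ((2 : ℝ) ^ k)⁻¹ = 1 := mul_inv_cancel₀ (by positivity)
  rw [show (k : ℤ) + 1 - t = k + (1 - t) by ring, show t + 1 - ((k : ℤ) + 1) = t - k by ring,
    zpow_add₀ h2, zpow_sub₀ h2 t k, zpow_natCast, inv_pow, div_eq_mul_inv]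
  linear_combination (-((2 : ℝ) ^ k * ((2 : ℝ) ^ k)⁻¹)) * hprod - 2 * hx

theorem stmt_16_general (m : ℕ) (t : ℤ) :
    Matrix.vecMul
      (fun i : Fin m =>
        ((2 : ℝ) ^ (((i : ℕ) : ℤ) + 1 - t) - 1) *
          (1 - (2 : ℝ) ^ (t + 1 - (((i : ℕ) : ℤ) + 1))))
      (matrixA m) = 0 := by
  refine vecMul_matrixA_eq_zero
    (fun k : ℕ => ((2 : ℝ) ^ ((k : ℤ) + 1 - t) - 1) * (1 - 2 ^ (t + 1 - ((k : ℤ) + 1))))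
    fun k => ?_
  simp only [two_zpow_sub_one_mul_one_sub_two_zpow]
  linear_combination (2 : ℝ) ^ (1 - t) * geometric_recurrence (r := 2) (by norm_num) k +
    (2 : ℝ) ^ t * geometric_recurrence (r := 2⁻¹) (by norm_num) k -
    3 * geometric_recurrence (r := 1) (by norm_num) k

/-- For `m ≥ 5` and every integer `t`, the vector `λ` with 1-based entries
`λ_i = (2^(i-t) - 1)(1 - 2^(t+1-i))` (integer powers of `2` in `ℝ`) lies in the
left kernel of `A'_m`: it describes a linear dependence among the rows of `A'_m`. -/
theorem stmt_16 (m : ℕ) (hm : 5 ≤ m) (t : ℤ) :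
    Matrix.vecMul
      (fun i : Fin m =>
        ((2 : ℝ) ^ (((i : ℕ) : ℤ) + 1 - t) - 1) *
          (1 - (2 : ℝ) ^ (t + 1 - (((i : ℕ) : ℤ) + 1))))
      (matrixA m) = 0 :=
  stmt_16_general m t
end

section
/- For m ≥ 5, let A'_m be the m × (m−4) real matrix (rows indexed 1,…,m, columns indexed 1,…,m−4) whose column j has entries 2, −7, 7, −2 in rows j+1, j+2, j+3, j+4 respectively, and 0 elsewhere. Then for every t with 2 ≤ t ≤ m−1, the rows of A'_m with indices in {1,…,m} \ {1, t, t+1} span ℝ^(m−4). -/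
/-- Auxiliary family of vectors: `vv m k` is the `k`-th standard unit vector
when `0 ≤ k < m - 4`, and `0` otherwise. -/
noncomputable def vv (m : ℕ) (k : ℤ) : Fin (m - 4) → ℝ :=
  if h : 0 ≤ k ∧ k < ((m - 4 : ℕ) : ℤ) then Pi.single ⟨k.toNat, by omega⟩ 1 else 0

lemma vv_apply (m : ℕ) (k : ℤ) (j : Fin (m - 4)) :
    vv m k j = if ((j : ℕ) : ℤ) = k then 1 else 0 := by
  unfold vv
  have hj := j.isLt
  split_ifs with h h2 h2
  · simp only [Pi.single_apply, Fin.ext_iff, Fin.val_mk]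
    rw [if_pos (by omega)]
  · simp only [Pi.single_apply, Fin.ext_iff, Fin.val_mk]
    rw [if_neg (by omega)]
  · exfalso; omega
  · rfl

lemma vv_neg (m : ℕ) (k : ℤ) (h : k < 0) : vv m k = 0 := by
  unfold vv; rw [dif_neg (by omega)]

lemma vv_big (m : ℕ) (k : ℤ) (h : ((m - 4 : ℕ) : ℤ) ≤ k) : vv m k = 0 := by
  unfold vv; rw [dif_neg (by omega)]

lemma single_eq_vv (m : ℕ) (j : Fin (m - 4)) :
    (Pi.single j 1 : Fin (m - 4) → ℝ) = vv m ((j : ℕ) : ℤ) := by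
  funext j'
  rw [vv_apply, Pi.single_apply]
  by_cases h : j' = j
  · rw [if_pos h, if_pos (by rw [h])]
  · rw [if_neg h, if_neg fun he => h (Fin.ext (by omega))]

lemma rowEq (m : ℕ) (i : Fin m) :
    matrixA m i = (2 : ℝ) • vv m (((i : ℕ) : ℤ) - 1) + (-7 : ℝ) • vv m (((i : ℕ) : ℤ) - 2)
      + (7 : ℝ) • vv m (((i : ℕ) : ℤ) - 3) + (-2 : ℝ) • vv m (((i : ℕ) : ℤ) - 4) := by
  funext j
  simp only [matrixA, Pi.add_apply, Pi.smul_apply, vv_apply, smul_eq_mul]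
  split_ifs <;> first | omega | norm_num

/-- For `m ≥ 5` and every `t` with `2 ≤ t ≤ m - 1`, the rows of `A'_m` whose
1-based index lies in `{1, …, m} \ {1, t, t+1}` span `ℝ^(m-4)`. -/
theorem stmt_17 (m : ℕ) (hm : 5 ≤ m) (t : ℕ) (ht2 : 2 ≤ t) (htm : t ≤ m - 1) :
    Submodule.span ℝ
        (matrixA m ''
          {i : Fin m | (i : ℕ) + 1 ≠ 1 ∧ (i : ℕ) + 1 ≠ t ∧ (i : ℕ) + 1 ≠ t + 1}) =
      (⊤ : Submodule ℝ (Fin (m - 4) → ℝ)) := by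
  set S := Submodule.span ℝ
      (matrixA m ''
        {i : Fin m | (i : ℕ) + 1 ≠ 1 ∧ (i : ℕ) + 1 ≠ t ∧ (i : ℕ) + 1 ≠ t + 1}) with hS
  -- upward induction: unit vectors with index ≤ t - 3
  have hup : ∀ n : ℕ, (n : ℤ) ≤ (t : ℤ) - 3 → vv m ((n : ℕ) : ℤ) ∈ S := by
    intro n
    induction n using Nat.strong_induction_on with
    | _ n IH =>
      intro hn
      have hlt : n + 1 < m := by omega
      have hmem : matrixA m ⟨n + 1, hlt⟩ ∈ S := by
        apply Submodule.subset_span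
        exact ⟨⟨n + 1, hlt⟩, ⟨by simp, by simp; omega, by simp; omega⟩, rfl⟩
      have heq := rowEq m ⟨n + 1, hlt⟩
      simp only [Fin.val_mk] at heq
      have e1 : ((n + 1 : ℕ) : ℤ) - 1 = (n : ℤ) := by push_cast; ring
      have e2 : ((n + 1 : ℕ) : ℤ) - 2 = (n : ℤ) - 1 := by push_cast; ring
      have e3 : ((n + 1 : ℕ) : ℤ) - 3 = (n : ℤ) - 2 := by push_cast; ring
      have e4 : ((n + 1 : ℕ) : ℤ) - 4 = (n : ℤ) - 3 := by push_cast; ring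
      rw [e1, e2, e3, e4] at heq
      have key : vv m ((n : ℕ) : ℤ) = (1/2 : ℝ) • matrixA m ⟨n + 1, hlt⟩
          + (7/2 : ℝ) • vv m ((n : ℤ) - 1) - (7/2 : ℝ) • vv m ((n : ℤ) - 2)
          + vv m ((n : ℤ) - 3) := by
        rw [heq]; module
      have h1 : vv m ((n : ℤ) - 1) ∈ S := by
        rcases Nat.lt_or_ge n 1 with h | h
        · rw [vv_neg m _ (by omega)]; exact zero_mem S
        · rw [show (n : ℤ) - 1 = ((n - 1 : ℕ) : ℤ) from by omega]
          exact IH (n - 1) (by omega) (by omega)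
      have h2 : vv m ((n : ℤ) - 2) ∈ S := by
        rcases Nat.lt_or_ge n 2 with h | h
        · rw [vv_neg m _ (by omega)]; exact zero_mem S
        · rw [show (n : ℤ) - 2 = ((n - 2 : ℕ) : ℤ) from by omega]
          exact IH (n - 2) (by omega) (by omega)
      have h3 : vv m ((n : ℤ) - 3) ∈ S := by
        rcases Nat.lt_or_ge n 3 with h | h
        · rw [vv_neg m _ (by omega)]; exact zero_mem S
        · rw [show (n : ℤ) - 3 = ((n - 3 : ℕ) : ℤ) from by omega]
          exact IH (n - 3) (by omega) (by omega)
      rw [key]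
      exact Submodule.add_mem _ (Submodule.sub_mem _
        (Submodule.add_mem _ (S.smul_mem _ hmem) (S.smul_mem _ h1)) (S.smul_mem _ h2)) h3
  -- downward induction: unit vectors with index ≥ t - 3
  have hdown : ∀ d : ℕ, (t : ℤ) - 3 ≤ (m : ℤ) - 5 - (d : ℤ) →
      vv m ((m : ℤ) - 5 - (d : ℤ)) ∈ S := by
    intro d
    induction d using Nat.strong_induction_on with
    | _ d IH =>
      intro hd
      have hdm : d ≤ m - 4 := by omega
      have hlt : m - 1 - d < m := by omega
      have hmem : matrixA m ⟨m - 1 - d, hlt⟩ ∈ S := by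
        apply Submodule.subset_span
        exact ⟨⟨m - 1 - d, hlt⟩, ⟨by simp; omega, by simp; omega, by simp; omega⟩, rfl⟩
      have heq := rowEq m ⟨m - 1 - d, hlt⟩
      simp only [Fin.val_mk] at heq
      have e1 : ((m - 1 - d : ℕ) : ℤ) - 1 = (m : ℤ) - 5 - (d : ℤ) + 3 := by omega
      have e2 : ((m - 1 - d : ℕ) : ℤ) - 2 = (m : ℤ) - 5 - (d : ℤ) + 2 := by omega
      have e3 : ((m - 1 - d : ℕ) : ℤ) - 3 = (m : ℤ) - 5 - (d : ℤ) + 1 := by omega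
      have e4 : ((m - 1 - d : ℕ) : ℤ) - 4 = (m : ℤ) - 5 - (d : ℤ) := by omega
      rw [e1, e2, e3, e4] at heq
      have key : vv m ((m : ℤ) - 5 - (d : ℤ)) =
          vv m ((m : ℤ) - 5 - (d : ℤ) + 3)
          - (7/2 : ℝ) • vv m ((m : ℤ) - 5 - (d : ℤ) + 2)
          + (7/2 : ℝ) • vv m ((m : ℤ) - 5 - (d : ℤ) + 1)
          - (1/2 : ℝ) • matrixA m ⟨m - 1 - d, hlt⟩ := by
        rw [heq]; module
      have h1 : vv m ((m : ℤ) - 5 - (d : ℤ) + 3) ∈ S := by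
        rcases Nat.lt_or_ge d 3 with h | h
        · rw [vv_big m _ (by omega)]; exact zero_mem S
        · rw [show (m : ℤ) - 5 - (d : ℤ) + 3 = (m : ℤ) - 5 - ((d - 3 : ℕ) : ℤ) from by omega]
          exact IH (d - 3) (by omega) (by omega)
      have h2 : vv m ((m : ℤ) - 5 - (d : ℤ) + 2) ∈ S := by
        rcases Nat.lt_or_ge d 2 with h | h
        · rw [vv_big m _ (by omega)]; exact zero_mem S
        · rw [show (m : ℤ) - 5 - (d : ℤ) + 2 = (m : ℤ) - 5 - ((d - 2 : ℕ) : ℤ) from by omega]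
          exact IH (d - 2) (by omega) (by omega)
      have h3 : vv m ((m : ℤ) - 5 - (d : ℤ) + 1) ∈ S := by
        rcases Nat.lt_or_ge d 1 with h | h
        · rw [vv_big m _ (by omega)]; exact zero_mem S
        · rw [show (m : ℤ) - 5 - (d : ℤ) + 1 = (m : ℤ) - 5 - ((d - 1 : ℕ) : ℤ) from by omega]
          exact IH (d - 1) (by omega) (by omega)
      rw [key]
      exact Submodule.sub_mem _ (Submodule.add_mem _
        (Submodule.sub_mem _ h1 (S.smul_mem _ h2)) (S.smul_mem _ h3)) (S.smul_mem _ hmem)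
  -- every standard unit vector is in S
  have hsingle : ∀ j : Fin (m - 4), (Pi.single j 1 : Fin (m - 4) → ℝ) ∈ S := by
    intro j
    have hj := j.isLt
    rw [single_eq_vv]
    rcases le_or_gt ((j : ℕ) : ℤ) ((t : ℤ) - 3) with h | h
    · exact hup (j : ℕ) h
    · have hd : ((j : ℕ) : ℤ) = (m : ℤ) - 5 - ((m - 5 - (j : ℕ) : ℕ) : ℤ) := by omega
      rw [hd]
      exact hdown (m - 5 - (j : ℕ)) (by omega)
  -- conclude
  rw [eq_top_iff]
  intro x _
  have hx : x = ∑ j : Fin (m - 4), x j • (Pi.single j 1 : Fin (m - 4) → ℝ) := by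
    funext j'
    simp only [Finset.sum_apply, Pi.smul_apply, Pi.single_apply, smul_eq_mul, mul_ite, mul_one, mul_zero]
    rw [Finset.sum_ite_eq Finset.univ j' x]
    simp
  rw [hx]
  exact Submodule.sum_mem _ fun j _ => S.smul_mem _ (hsingle j)
end
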